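/- Let G be a distribution function that is not regular, i.e. either G(G_*−) < 1 or limsup_{x→G_*−} (1 − G(x−))/(1 − G(x)) > 1. Then there is no γ ∈ (0,1) and no sequence (v_n) of reals with G(v_n)^n → γ. -/

import Mathlib

open MeasureTheory Filter Topology Set

noncomputable section

/-- Event that the partial maximum `max_{0 ≤ j ≤ n-1} X_j` is at most `x`
(empty maximum interpreted as `-∞`, so the event is everything for `n = 0`). -/
def maxEvent {Ω : Type*} (X : ℕ → Ω → ℝ) (n : ℕ) (x : ℝ) : Set Ω :=
  {ω | ∀ j < n, X j ω ≤ x}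

/-- `G` is a distribution function: nondecreasing, right-continuous, with limits
`0` at `-∞` and `1` at `+∞`. -/
def IsDistFun (G : ℝ → ℝ) : Prop :=
  Monotone G ∧ (∀ x, ContinuousWithinAt G (Set.Ici x) x) ∧
    Tendsto G atBot (nhds 0) ∧ Tendsto G atTop (nhds 1)

/-- `G` is a phantom distribution function for `X` under `P`:
`sup_x |P(M_n ≤ x) - G(x)^n| → 0`. -/
def IsPhantom {Ω : Type*} [MeasurableSpace Ω] (P : Measure Ω) (X : ℕ → Ω → ℝ)
    (G : ℝ → ℝ) : Prop :=
  Tendsto (fun n => ⨆ x : ℝ, |(P (maxEvent X n x)).toReal - G x ^ n|) atTop (nhds 0)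

/-- The right end `G_* = sup {x : G x < 1}`, as an extended real. -/
def GstarE (G : ℝ → ℝ) : EReal := sSup ((fun x : ℝ => (x : EReal)) '' {x | G x < 1})

/-- The filter of real numbers approaching `c ∈ (-∞, +∞]` strictly from the left
(equals `atTop` when `c = ⊤`). -/
def leftFilter (c : EReal) : Filter ℝ :=
  Filter.comap (fun x : ℝ => (x : EReal)) (nhdsWithin c (Set.Iio c))

/-- Regularity in the sense of O'Brien: `G(G_*-) = 1` and
`(1 - G(x-))/(1 - G(x)) → 1` as `x → G_*-`. -/
def IsRegularDF (G : ℝ → ℝ) : Prop :=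
  Tendsto G (leftFilter (GstarE G)) (nhds 1) ∧
    Tendsto (fun x => (1 - Function.leftLim G x) / (1 - G x))
      (leftFilter (GstarE G)) (nhds 1)

/-!
If `G (v n) ^ n → γ ∈ (0, 1)` then `n (1 - G (v n)) → -log γ`. Hence `G (v n) → 1`, so `v n`
approaches `G_*` from the left, which rules out `G (G_*-) < 1`; and consecutive tails
`1 - G (v n)` have ratio tending to `1`. A point `x` close to `G_*` with
`(1 - G (x-)) / (1 - G x) > 1 + δ` is a gap in the range of `G`; the tails, which tend to `0`,
must cross it in a single step, and that step has ratio `> 1 + δ`.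
-/

open Real Function

section Levels

variable {x : ℕ → ℝ} {γ : ℝ}

theorem tendsto_one_of_tendsto_pow (hx : ∀ n, 0 ≤ x n) (hγ : 0 < γ)
    (h : Tendsto (fun n => x n ^ n) atTop (𝓝 γ)) : Tendsto x atTop (𝓝 1) := by
  have hroot : Tendsto (fun n : ℕ => (x n ^ n) ^ ((n : ℝ)⁻¹)) atTop (𝓝 (γ ^ (0 : ℝ))) :=
    h.rpow (tendsto_inv_atTop_zero.comp tendsto_natCast_atTop_atTop) (Or.inl hγ.ne')
  rw [rpow_zero] at hroot
  refine hroot.congr' ?_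
  filter_upwards [eventually_ne_atTop 0] with n hn
  exact pow_rpow_inv_natCast (hx n) hn

/-- Squeezed between `-n log x` and `-x n log x`, by `1 - x⁻¹ ≤ log x ≤ x - 1`. -/
theorem tendsto_nat_mul_one_sub_of_tendsto_pow (hx : ∀ n, 0 ≤ x n) (hγ : 0 < γ)
    (h : Tendsto (fun n => x n ^ n) atTop (𝓝 γ)) :
    Tendsto (fun n : ℕ => n * (1 - x n)) atTop (𝓝 (-log γ)) := by
  have hx1 := tendsto_one_of_tendsto_pow hx hγ h
  have hlog : Tendsto (fun n : ℕ => -(n * log (x n))) atTop (𝓝 (-log γ)) := by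
    refine ((continuousAt_log hγ.ne').tendsto.comp h).neg.congr fun n => ?_
    simp only [comp_apply, log_pow]
  have hlower : Tendsto (fun n : ℕ => x n * -(n * log (x n))) atTop (𝓝 (-log γ)) := by
    simpa only [one_mul] using hx1.mul hlog
  refine tendsto_of_tendsto_of_tendsto_of_le_of_le' hlower hlog ?_ ?_
  · filter_upwards [hx1.eventually (lt_mem_nhds one_pos)] with n hn
    have hxlog : x n - 1 ≤ x n * log (x n) := by
      have := mul_le_mul_of_nonneg_left (one_sub_inv_le_log_of_pos hn) hn.le
      rwa [mul_one_sub, mul_inv_cancel₀ hn.ne'] at this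
    nlinarith [mul_le_mul_of_nonneg_left hxlog n.cast_nonneg]
  · filter_upwards [hx1.eventually (lt_mem_nhds one_pos)] with n hn
    nlinarith [log_le_sub_one_of_pos hn, (n.cast_nonneg : (0 : ℝ) ≤ n)]

end Levels

theorem tendsto_div_succ_of_tendsto_nat_mul {t : ℕ → ℝ} {c : ℝ} (hc : c ≠ 0)
    (h : Tendsto (fun n : ℕ => n * t n) atTop (𝓝 c)) :
    Tendsto (fun n => t n / t (n + 1)) atTop (𝓝 1) := by
  have hsucc : Tendsto (fun n : ℕ => (n + 1 : ℝ) * t (n + 1)) atTop (𝓝 c) := by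
    refine (h.comp (tendsto_add_atTop_nat 1)).congr fun n => ?_
    simp only [comp_apply, Nat.cast_succ]
  have hquot := (h.div hsucc hc).div (tendsto_natCast_div_add_atTop (1 : ℝ)) one_ne_zero
  rw [div_self hc, div_one] at hquot
  refine hquot.congr' ?_
  filter_upwards [eventually_ne_atTop 0] with n hn
  show n * t n / ((n + 1) * t (n + 1)) / (n / (n + 1)) = _
  rw [mul_div_mul_comm, mul_div_cancel_left₀ _ (by positivity)]

/-- The values of `G` skip the gap `(leftLim G x, G x)`, so the sequence `G (v n)`, which starts
below it and ends above it, has to jump across it in a single step. -/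
theorem Monotone.exists_jump_ratio_le {G : ℝ → ℝ} (hG : Monotone G) {v : ℕ → ℝ} {x : ℝ}
    {N M : ℕ} (hNM : N ≤ M) (hvN : v N < x) (hxM : G x ≤ G (v M))
    (hjump : leftLim G x < G x) (hlt : ∀ n ≥ N, G (v n) < 1) :
    ∃ n ≥ N, (1 - leftLim G x) / (1 - G x) ≤ (1 - G (v n)) / (1 - G (v (n + 1))) := by
  obtain ⟨k, hk, hk1⟩ := Nat.exists_not_and_succ_of_not_zero_of_exists
    (p := fun k => G x ≤ G (v (N + k)))
    (by simpa using (hG.le_leftLim hvN).trans_lt hjump) ⟨M - N, by rwa [Nat.add_sub_cancel' hNM]⟩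
  have hk1 : G x ≤ G (v (N + k + 1)) := hk1
  have hbelow : G (v (N + k)) ≤ leftLim G x := by
    rcases lt_or_ge (v (N + k)) x with h | h
    · exact hG.le_leftLim h
    · exact absurd (hG h) hk
  refine ⟨N + k, Nat.le_add_right N k, div_le_div₀ ?_ ?_ ?_ ?_⟩
  · linarith [hlt (N + k) (by omega)]
  · linarith
  · linarith [hlt (N + k + 1) (by omega)]
  · linarith

section RightEnd

variable {G : ℝ → ℝ}

theorem lt_one_of_coe_lt_GstarE (hG : Monotone G) {x : ℝ} (hx : (x : EReal) < GstarE G) :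
    G x < 1 := by
  obtain ⟨_, ⟨z, hz, rfl⟩, hxz⟩ := lt_sSup_iff.1 hx
  exact (hG (EReal.coe_lt_coe_iff.1 hxz).le).trans_lt hz

theorem coe_lt_GstarE_of_lt_one {x : ℝ} (hG : ContinuousWithinAt G (Ici x) x) (hx : G x < 1) :
    (x : EReal) < GstarE G := by
  obtain ⟨y, hy, hxy⟩ := (((hG.eventually (gt_mem_nhds hx)).filter_mono
    (nhdsWithin_mono _ Ioi_subset_Ici_self)).and self_mem_nhdsWithin).exists
  exact (EReal.coe_lt_coe_iff.2 hxy).trans_le (le_sSup ⟨y, hy, rfl⟩)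

theorem bot_lt_GstarE (hG : Tendsto G atBot (𝓝 0)) : ⊥ < GstarE G := by
  obtain ⟨x, hx⟩ := (hG.eventually (gt_mem_nhds one_pos)).exists
  exact (EReal.bot_lt_coe x).trans_le (le_sSup ⟨x, hx, rfl⟩)

end RightEnd

section LeftFilter

variable {c : EReal}

theorem leftFilter_neBot (hc : ⊥ < c) : (leftFilter c).NeBot := by
  rw [leftFilter, comap_neBot_iff]
  intro t ht
  obtain ⟨l, hl, hsub⟩ := (mem_nhdsLT_iff_exists_Ioo_subset' hc).1 ht
  obtain ⟨y, hly, hyc⟩ := EReal.exists_between_coe_real hl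
  exact ⟨y, hsub ⟨hly, hyc⟩⟩

theorem eventually_coe_lt_leftFilter : ∀ᶠ x : ℝ in leftFilter c, (x : EReal) < c :=
  preimage_mem_comap self_mem_nhdsWithin

theorem eventually_gt_leftFilter {y : ℝ} (hy : (y : EReal) < c) :
    ∀ᶠ x in leftFilter c, y < x :=
  Eventually.mono (preimage_mem_comap (mem_nhdsWithin_of_mem_nhds (isOpen_Ioi.mem_nhds hy)))
    fun _ hx => EReal.coe_lt_coe_iff.1 hx

end LeftFilter

namespace IsDistFun

variable {G : ℝ → ℝ}

theorem nonneg (hG : IsDistFun G) (x : ℝ) : 0 ≤ G x :=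
  le_of_tendsto hG.2.2.1 (eventually_atBot.2 ⟨x, fun _ hy => hG.1 hy⟩)

theorem tendsto_leftFilter (hG : IsDistFun G) {α : Type*} {l : Filter α} {v : α → ℝ}
    (h1 : Tendsto (fun a => G (v a)) l (𝓝 1)) (hlt : ∀ᶠ a in l, G (v a) < 1) :
    Tendsto v l (leftFilter (GstarE G)) := by
  have hvc : ∀ᶠ a in l, (v a : EReal) < GstarE G :=
    hlt.mono fun a ha => coe_lt_GstarE_of_lt_one (hG.2.1 _) ha
  rw [leftFilter, tendsto_comap_iff, tendsto_nhdsWithin_iff]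
  refine ⟨tendsto_order.2 ⟨fun b hb => ?_, fun b hb => hvc.mono fun a ha => ha.trans hb⟩, hvc⟩
  obtain ⟨_, ⟨z, hz, rfl⟩, hbz⟩ := lt_sSup_iff.1 hb
  filter_upwards [h1.eventually (lt_mem_nhds hz)] with a ha
  exact hbz.trans (EReal.coe_lt_coe_iff.2 (hG.1.reflect_lt ha))

theorem limsup_jump_ratio_le_one (hG : IsDistFun G) {v : ℕ → ℝ}
    (h1 : Tendsto (fun n => G (v n)) atTop (𝓝 1)) (hlt : ∀ᶠ n in atTop, G (v n) < 1)
    (hratio : Tendsto (fun n => (1 - G (v n)) / (1 - G (v (n + 1)))) atTop (𝓝 1)) :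
    limsup (fun x => (1 - leftLim G x) / (1 - G x)) (leftFilter (GstarE G)) ≤ 1 := by
  have := leftFilter_neBot (bot_lt_GstarE hG.2.2.1)
  have hbelow : ∀ᶠ x in leftFilter (GstarE G), G x < 1 :=
    eventually_coe_lt_leftFilter.mono fun _ hx => lt_one_of_coe_lt_GstarE hG.1 hx
  have hcobdd : IsCoboundedUnder (· ≤ ·) (leftFilter (GstarE G))
      (fun x => (1 - leftLim G x) / (1 - G x)) :=
    IsCoboundedUnder.of_frequently_ge (hbelow.mono fun x hx =>
      (one_le_div (sub_pos.2 hx)).2 (by linarith [hG.1.leftLim_le (le_refl x)])).frequently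
  refine le_of_forall_pos_le_add fun δ hδ => limsup_le_of_le hcobdd ?_
  obtain ⟨N, hN⟩ := eventually_atTop.1
    (hlt.and (hratio.eventually (gt_mem_nhds (lt_add_of_pos_right 1 hδ))))
  filter_upwards [hbelow, eventually_gt_leftFilter
    (coe_lt_GstarE_of_lt_one (hG.2.1 _) (hN N le_rfl).1)] with x hx hvx
  by_contra! hRx
  have hjump : leftLim G x < G x := by
    rw [lt_div_iff₀ (sub_pos.2 hx)] at hRx
    nlinarith [mul_pos hδ (sub_pos.2 hx)]
  obtain ⟨M, hM, hNM⟩ := ((h1.eventually (lt_mem_nhds hx)).and (eventually_ge_atTop N)).exists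
  obtain ⟨n, hn, hle⟩ := hG.1.exists_jump_ratio_le hNM hvx hM.le hjump fun n hn => (hN n hn).1
  linarith [(hN n hn).2]

end IsDistFun

theorem no_levels_for_irregular (G : ℝ → ℝ) (hG : IsDistFun G)
    (hirr : (∃ L : ℝ, L < 1 ∧ Tendsto G (leftFilter (GstarE G)) (nhds L)) ∨
      1 < Filter.limsup (fun x => (1 - Function.leftLim G x) / (1 - G x))
            (leftFilter (GstarE G))) :
    ¬ ∃ γ ∈ Set.Ioo (0 : ℝ) 1, ∃ v : ℕ → ℝ,
        Tendsto (fun n => G (v n) ^ n) atTop (nhds γ) := by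
  rintro ⟨γ, ⟨hγ0, hγ1⟩, v, hv⟩
  have h1 := tendsto_one_of_tendsto_pow (fun n => hG.nonneg (v n)) hγ0 hv
  have hmul := tendsto_nat_mul_one_sub_of_tendsto_pow (fun n => hG.nonneg (v n)) hγ0 hv
  have hlogγ : 0 < -log γ := neg_pos.2 (log_neg hγ0 hγ1)
  have hlt : ∀ᶠ n in atTop, G (v n) < 1 :=
    (hmul.eventually (lt_mem_nhds hlogγ)).mono fun n hn =>
      sub_pos.1 (pos_of_mul_pos_right hn n.cast_nonneg)
  rcases hirr with ⟨L, hL, hGL⟩ | hlimsup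
  · exact hL.ne (tendsto_nhds_unique (hGL.comp (hG.tendsto_leftFilter h1 hlt)) h1)
  · exact hlimsup.not_ge (hG.limsup_jump_ratio_le_one h1 hlt
      (tendsto_div_succ_of_tendsto_nat_mul hlogγ.ne' hmul))
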